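/- Suppose n ≥ 1. For every error vector e and every nonzero error vector v in (Fin n → ZMod 2), one has π(v) = e if and only if v ∈ C(e); that is, the children of e are exactly the nonzero vectors whose parent is e. -/

import Mathlib

/-- The index of the least reliable flipped bit: the largest coordinate `j`
with `e j ≠ 0` (as a natural number; `0` if `e = 0`). -/
def jstar {n : ℕ} (e : Fin n → ZMod 2) : ℕ :=
  (Finset.univ.filter fun j => e j ≠ 0).sup fun j => (j : ℕ)

/-- The parent `π(e)` of an error vector: zero out coordinate `j*(e)` and,
if `j*(e) > 0`, set coordinate `j*(e) - 1` to `1`; `π(0) = 0`. -/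
def parent {n : ℕ} (e : Fin n → ZMod 2) : Fin n → ZMod 2 :=
  if e = 0 then 0
  else fun j =>
    if (j : ℕ) = jstar e then 0
    else if 0 < jstar e ∧ (j : ℕ) = jstar e - 1 then 1
    else e j
/-- `deltaN k` is the vector with a `1` at the coordinate of index `k` and `0` elsewhere. -/
def deltaN {n : ℕ} (k : ℕ) : Fin n → ZMod 2 := fun i => if (i : ℕ) = k then 1 else 0

/-- The children set `C(e)`. -/
def children {n : ℕ} (e : Fin n → ZMod 2) : Finset (Fin n → ZMod 2) :=
  if e = 0 then {deltaN 0}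
  else if jstar e = n - 1 then ∅
  else {e + deltaN (jstar e + 1), e + deltaN (jstar e) + deltaN (jstar e + 1)}

/-!
A nonzero `v` with `j*(v) = k` has parent with top coordinate `k - 1` (or the parent is `0`
when `k = 0`, i.e. `v = δ_0`), and `v` is recovered from `π(v)` by adding `δ_k`, plus `δ_{k-1}`
when `v (k-1) = 0`; these are exactly the two children of `π(v)`. Conversely both children of
`e` have top coordinate `j*(e) + 1`, and applying `π` to them undoes the added deltas.
-/

lemma ZMod.two_ne_zero_iff_eq_one {a : ZMod 2} : a ≠ 0 ↔ a = 1 := by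
  revert a; decide

section

variable {n : ℕ}

lemma le_jstar {v : Fin n → ZMod 2} {j : Fin n} (h : v j ≠ 0) : (j : ℕ) ≤ jstar v :=
  Finset.le_sup (f := fun j : Fin n => (j : ℕ)) (by simpa using h)

lemma apply_eq_zero_of_jstar_lt {v : Fin n → ZMod 2} {j : Fin n} (h : jstar v < j) : v j = 0 :=
  by_contra fun hj => (le_jstar hj).not_gt h

lemma jstar_eq {v : Fin n → ZMod 2} {k : ℕ} {j : Fin n} (hjk : (j : ℕ) = k) (hj : v j ≠ 0)
    (h : ∀ i : Fin n, k < i → v i = 0) : jstar v = k :=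
  le_antisymm (Finset.sup_le fun i hi => not_lt.1 fun hki => by simp_all) (hjk ▸ le_jstar hj)

lemma exists_apply_jstar {v : Fin n → ZMod 2} (hv : v ≠ 0) :
    ∃ j : Fin n, (j : ℕ) = jstar v ∧ v j = 1 := by
  have hne : (Finset.univ.filter fun j => v j ≠ 0).Nonempty := by
    simpa [Finset.filter_nonempty_iff, funext_iff] using hv
  obtain ⟨j, hj, hsup⟩ := Finset.exists_mem_eq_sup _ hne (fun j : Fin n => (j : ℕ))
  exact ⟨j, hsup.symm, ZMod.two_ne_zero_iff_eq_one.1 (Finset.mem_filter.1 hj).2⟩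

lemma parent_deltaN_zero : parent (deltaN 0 : Fin n → ZMod 2) = 0 := by
  by_cases h : (deltaN 0 : Fin n → ZMod 2) = 0
  · simp [parent, h]
  obtain ⟨j, -, hj⟩ := exists_apply_jstar h
  have hj0 : (j : ℕ) = 0 := by by_contra hj0; simp [deltaN, hj0] at hj
  have hjstar : jstar (deltaN 0 : Fin n → ZMod 2) = 0 :=
    jstar_eq hj0 (by simp [deltaN, hj0]) fun i hi => by simp [deltaN, hi.ne']
  funext i
  by_cases hi : (i : ℕ) = 0 <;> simp [parent, h, hjstar, hi, deltaN]

-- `w` is `e` or `e + δ_{j*(e)}`, one for each child of `e`.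
lemma parent_add_deltaN_succ {e w : Fin n → ZMod 2} (he : e ≠ 0) (hm : jstar e + 1 < n)
    (hw : ∀ i : Fin n, (i : ℕ) ≠ jstar e → w i = e i) :
    parent (w + deltaN (jstar e + 1)) = e := by
  set m := jstar e
  set v : Fin n → ZMod 2 := w + deltaN (m + 1) with hv
  obtain ⟨j, hj, he1⟩ := exists_apply_jstar he
  have habove (i : Fin n) (hi : m < i) : e i = 0 := apply_eq_zero_of_jstar_lt hi
  have hvtop : v ⟨m + 1, hm⟩ = 1 := by
    simp [hv, deltaN, hw ⟨m + 1, hm⟩ (by simp), habove ⟨m + 1, hm⟩ (by simp)]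
  have hvjstar : jstar v = m + 1 :=
    jstar_eq (j := ⟨m + 1, hm⟩) rfl (by simp [hvtop]) fun i hi => by
      simp [hv, deltaN, hw i (by omega), habove i (by omega), hi.ne']
  have hv0 : v ≠ 0 := fun h => by simp [h] at hvtop
  funext i
  simp only [parent, if_neg hv0, hvjstar, Nat.add_sub_cancel]
  split_ifs with h1 h2
  · exact (habove i (by omega)).symm
  · rw [Fin.ext (h2.2.trans hj.symm), he1]
  · simp [hv, deltaN, h1, hw i fun h => h2 ⟨m.succ_pos, h⟩]

lemma parent_eq_of_mem_children {e v : Fin n → ZMod 2} (h : v ∈ children e) : parent v = e := by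
  unfold children at h
  split_ifs at h with he hlast
  · rw [Finset.mem_singleton.1 h, parent_deltaN_zero, he]
  · simp at h
  have hm : jstar e + 1 < n := by
    obtain ⟨j, hj, -⟩ := exists_apply_jstar he
    omega
  rcases Finset.mem_insert.1 h with rfl | h
  · exact parent_add_deltaN_succ he hm fun _ _ => rfl
  · rw [Finset.mem_singleton.1 h]
    exact parent_add_deltaN_succ he hm fun i hi => by simp [deltaN, hi]

lemma mem_children_parent {v : Fin n → ZMod 2} (hv : v ≠ 0) : v ∈ children (parent v) := by
  obtain ⟨j, hj, hv1⟩ := exists_apply_jstar hv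
  set k := jstar v
  have hv_at (i : Fin n) (hi : (i : ℕ) = k) : v i = 1 := Fin.ext (hi.trans hj.symm) ▸ hv1
  have habove (i : Fin n) (hi : k < i) : v i = 0 := apply_eq_zero_of_jstar_lt hi
  have hparent (i : Fin n) : parent v i =
      if (i : ℕ) = k then 0 else if 0 < k ∧ (i : ℕ) = k - 1 then 1 else v i := by
    simp [parent, hv, k]
  rcases Nat.eq_zero_or_pos k with hk | hk
  · have hδ : v = deltaN 0 := funext fun i => by
      rcases Nat.eq_zero_or_pos i with hi | hi
      · simp [deltaN, hi, hv_at i (hi.trans hk.symm)]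
      · simp [deltaN, hi.ne', habove i (by omega)]
    simp [hδ, parent_deltaN_zero, children]
  set e := parent v
  let j' : Fin n := ⟨k - 1, by omega⟩
  have he1 : e j' = 1 := by simp [hparent, j', hk, show k - 1 ≠ k by omega]
  have he0 : e ≠ 0 := fun h => by simp [h] at he1
  have hejstar : jstar e = k - 1 :=
    jstar_eq (j := j') rfl (by simp [he1]) fun i hi => by
      rw [hparent]
      split_ifs <;> first | rfl | omega | exact habove i (by omega)
  have hsucc : k - 1 + 1 = k := by omega
  rw [children, if_neg he0, hejstar, if_neg (by omega), hsucc, Finset.mem_insert,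
    Finset.mem_singleton]
  have hv_below (i : Fin n) (hi : (i : ℕ) = k - 1) : v i = v j' := congrArg v (Fin.ext hi)
  rcases eq_or_ne (v j') 0 with hvj' | hvj'
  · right
    funext i
    simp only [Pi.add_apply, hparent, deltaN]
    split_ifs <;> simp_all [show (1 : ZMod 2) + 1 = 0 from rfl]
  · left
    rw [ZMod.two_ne_zero_iff_eq_one] at hvj'
    funext i
    simp only [Pi.add_apply, hparent, deltaN]
    split_ifs <;> simp_all

end

theorem parent_eq_iff_mem_children_general {n : ℕ}
    (e v : Fin n → ZMod 2) (hv : v ≠ 0) :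
    parent v = e ↔ v ∈ children e :=
  ⟨fun h => h ▸ mem_children_parent hv, parent_eq_of_mem_children⟩

theorem parent_eq_iff_mem_children {n : ℕ} (hn : 1 ≤ n)
    (e v : Fin n → ZMod 2) (hv : v ≠ 0) :
    parent v = e ↔ v ∈ children e :=
  parent_eq_iff_mem_children_general e v hv
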